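/- Strong completeness for plain interpretations: let I = ⟨A, v⟩ be a plain interpretation of P (v is injective on infons and the closure of any deductively closed set of values contains no new values of infons). Then for any context Γ there exists a closed set M with v(Γ) ⊆ M such that for every infon φ, if Γ ⊬ φ in P then v(φ) ∉ M. -/

import Mathlib

/-- Infons: formulas built from atoms, ⊤, ⊥, conjunction and primal implication. -/
inductive Infon : Type
  | atom : ℕ → Infon
  | top : Infon
  | bot : Infon
  | and : Infon → Infon → Infon
  | imp : Infon → Infon → Infon
deriving DecidableEq

/-- Derivability in the basic primal infon logic P (⊥ is an ordinary atom, no rule for it). -/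
inductive DerP : Set Infon → Infon → Prop
  | top (Γ : Set Infon) : DerP Γ .top
  | id (φ : Infon) : DerP {φ} φ
  | weak {Γ φ} (Δ : Set Infon) : DerP Γ φ → DerP (Γ ∪ Δ) φ
  | cut {Γ φ ψ} : DerP Γ φ → DerP (insert φ Γ) ψ → DerP Γ ψ
  | andI {Γ φ ψ} : DerP Γ φ → DerP Γ ψ → DerP Γ (.and φ ψ)
  | andE1 {Γ φ ψ} : DerP Γ (.and φ ψ) → DerP Γ φ
  | andE2 {Γ φ ψ} : DerP Γ (.and φ ψ) → DerP Γ ψ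
  | impI {Γ ψ} (φ : Infon) : DerP Γ ψ → DerP Γ (.imp φ ψ)
  | impE {Γ φ ψ} : DerP Γ φ → DerP Γ (.imp φ ψ) → DerP Γ ψ

/-- Derivability in P[⊥_w]: P plus the weak ⊥-elimination rule. -/
inductive DerW : Set Infon → Infon → Prop
  | top (Γ : Set Infon) : DerW Γ .top
  | id (φ : Infon) : DerW {φ} φ
  | weak {Γ φ} (Δ : Set Infon) : DerW Γ φ → DerW (Γ ∪ Δ) φ
  | cut {Γ φ ψ} : DerW Γ φ → DerW (insert φ Γ) ψ → DerW Γ ψ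
  | andI {Γ φ ψ} : DerW Γ φ → DerW Γ ψ → DerW Γ (.and φ ψ)
  | andE1 {Γ φ ψ} : DerW Γ (.and φ ψ) → DerW Γ φ
  | andE2 {Γ φ ψ} : DerW Γ (.and φ ψ) → DerW Γ ψ
  | impI {Γ ψ} (φ : Infon) : DerW Γ ψ → DerW Γ (.imp φ ψ)
  | impE {Γ φ ψ} : DerW Γ φ → DerW Γ (.imp φ ψ) → DerW Γ ψ
  | botEw {Γ φ ψ} : DerW Γ .bot → DerW Γ (.imp φ ψ) → DerW Γ ψ

/-- Positive atoms of an infon. -/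
def posAt : Infon → Set Infon
  | .and φ ψ => posAt φ ∪ posAt ψ
  | .imp _ ψ => posAt ψ
  | φ => {φ}

/-- Positive atoms of a context. -/
def posCtx (Γ : Set Infon) : Set Infon := ⋃ φ ∈ Γ, posAt φ

/-- Binary strings Σ* over Σ = {0,1}. -/
abbrev Str := List Bool

/-- A cryptographic infon algebra over binary strings: pairing with (partial) projections,
total encryption with (partial) decryption, and a nonempty public set E. -/
structure InfonAlgebra where
  pi : Str → Str → Str
  l : Str → Option Str
  r : Str → Option Str
  enc : Str → Str → Str
  dec : Str → Str → Option Str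
  E : Set Str
  E_nonempty : E.Nonempty
  l_pi : ∀ x y, l (pi x y) = some x
  r_pi : ∀ x y, r (pi x y) = some y
  dec_enc : ∀ x y, dec x (enc x y) = some y

/-- M ⊆ Σ* is closed (w.r.t. an infon algebra A). -/
def ClosedInfoSet (A : InfonAlgebra) (M : Set Str) : Prop :=
  A.E ⊆ M ∧
  (∀ a b, (a ∈ M ∧ b ∈ M) ↔ A.pi a b ∈ M) ∧
  (∀ a b, a ∈ M → A.enc a b ∈ M → b ∈ M) ∧
  (∀ a b, b ∈ M → A.enc a b ∈ M)

/-- An interpretation: an evaluation of infons by strings, commuting with the connectives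
(∧ goes to pairing, primal → goes to encryption), with v(⊤) ∈ E. -/
structure Interp (A : InfonAlgebra) where
  v : Infon → Str
  v_top : v .top ∈ A.E
  v_and : ∀ φ ψ, v (.and φ ψ) = A.pi (v φ) (v ψ)
  v_imp : ∀ φ ψ, v (.imp φ ψ) = A.enc (v φ) (v ψ)

/-- The closure of a set of strings: the least closed superset. -/
def closureA (A : InfonAlgebra) (M₀ : Set Str) : Set Str :=
  ⋂₀ {M | ClosedInfoSet A M ∧ M₀ ⊆ M}

/-- A set of infons is deductively closed if it is closed under derivability in P. -/
def DedClosed (T : Set Infon) : Prop := ∀ ψ, DerP T ψ → ψ ∈ T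

/-- A plain interpretation: v is injective, and the closure of (the set of values of) any
deductively closed set of infons contains no new values of infons. -/
def Plain (A : InfonAlgebra) (I : Interp A) : Prop :=
  Function.Injective I.v ∧
  ∀ T : Set Infon, DedClosed T →
    ∀ φ : Infon, I.v φ ∈ closureA A (I.v '' T) → I.v φ ∈ I.v '' T

namespace DerP

theorem of_mem {Γ : Set Infon} {φ : Infon} (h : φ ∈ Γ) : DerP Γ φ := by
  simpa [Set.singleton_union, Set.insert_eq_of_mem h] using DerP.weak Γ (DerP.id φ)

theorem of_forall_derP {Δ Γ : Set Infon} {ψ : Infon} (h : DerP Δ ψ)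
    (hΔ : ∀ χ ∈ Δ, DerP Γ χ) : DerP Γ ψ := by
  induction h generalizing Γ with
  | top => exact top Γ
  | id φ => exact hΔ φ rfl
  | weak _ _ ih => exact ih fun χ hχ => hΔ χ (Or.inl hχ)
  | cut _ _ ih₁ ih₂ =>
    exact ih₂ fun χ hχ => hχ.elim (fun hχφ => hχφ ▸ ih₁ hΔ) (hΔ χ)
  | andI _ _ ih₁ ih₂ => exact andI (ih₁ hΔ) (ih₂ hΔ)
  | andE1 _ ih => exact andE1 (ih hΔ)
  | andE2 _ ih => exact andE2 (ih hΔ)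
  | impI φ _ ih => exact impI φ (ih hΔ)
  | impE _ _ ih₁ ih₂ => exact impE (ih₁ hΔ) (ih₂ hΔ)

end DerP

theorem dedClosed_setOf_derP (Γ : Set Infon) : DedClosed {ψ | DerP Γ ψ} :=
  fun _ h => h.of_forall_derP fun _ hχ => hχ

theorem ClosedInfoSet.sInter {A : InfonAlgebra} {S : Set (Set Str)}
    (hS : ∀ M ∈ S, ClosedInfoSet A M) : ClosedInfoSet A (⋂₀ S) := by
  simp only [ClosedInfoSet, Set.subset_sInter_iff, Set.mem_sInter] at hS ⊢
  refine ⟨fun M hM => (hS M hM).1, fun a b => ?_, ?_, ?_⟩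
  · exact ⟨fun h M hM => ((hS M hM).2.1 a b).1 ⟨h.1 M hM, h.2 M hM⟩,
      fun h => ⟨fun M hM => (((hS M hM).2.1 a b).2 (h M hM)).1,
        fun M hM => (((hS M hM).2.1 a b).2 (h M hM)).2⟩⟩
  · exact fun a b ha hab M hM => (hS M hM).2.2.1 a b (ha M hM) (hab M hM)
  · exact fun a b hb M hM => (hS M hM).2.2.2 a b (hb M hM)

theorem closedInfoSet_closureA (A : InfonAlgebra) (M₀ : Set Str) :
    ClosedInfoSet A (closureA A M₀) :=
  ClosedInfoSet.sInter fun _ hM => hM.1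

theorem subset_closureA (A : InfonAlgebra) (M₀ : Set Str) : M₀ ⊆ closureA A M₀ :=
  fun _ hx _ hM => hM.2 hx

theorem Plain.mem_of_mem_closureA {A : InfonAlgebra} {I : Interp A} (hI : Plain A I)
    {T : Set Infon} (hT : DedClosed T) {φ : Infon}
    (hφ : I.v φ ∈ closureA A (I.v '' T)) : φ ∈ T := by
  obtain ⟨ψ, hψ, hψφ⟩ := hI.2 T hT φ hφ
  exact hI.1 hψφ ▸ hψ

/-- Strong completeness for plain interpretations: for any context Γ there is a closed set M
containing v(Γ) such that underivable infons are not valued in M. -/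
theorem strong_completeness_plain (A : InfonAlgebra) (I : Interp A) (hplain : Plain A I)
    (Γ : Set Infon) :
    ∃ M : Set Str, ClosedInfoSet A M ∧ (∀ ψ ∈ Γ, I.v ψ ∈ M) ∧
      ∀ φ : Infon, ¬ DerP Γ φ → I.v φ ∉ M :=
  ⟨closureA A (I.v '' {ψ | DerP Γ ψ}), closedInfoSet_closureA A _,
    fun ψ hψ => subset_closureA A _ ⟨ψ, DerP.of_mem hψ, rfl⟩,
    fun _ hφ hmem => hφ (hplain.mem_of_mem_closureA (dedClosed_setOf_derP Γ) hmem)⟩
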